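/- Let g(x|z; ψ, α) be the reparameterized two-component homoscedastic normal mixture density with true parameter ψ* = (η*, 0), η* = (γ*, μ*, v*). Then for every α ∈ (0,1), all x ∈ ℝ^d, z ∈ ℝ^p, and all i, j, k ∈ {1,…,d}: ∂³g/∂λ_i∂λ_j∂λ_k (x|z; ψ*, α) = α(1−α)(1−2α)·∂³f_v/∂μ_i∂μ_j∂μ_k (x|z; γ*, μ*, v*). -/

import Mathlib

open Real Matrix

noncomputable section

/-- Partial derivative of `F : (ι → ℝ) → ℝ` in the coordinate `i`. -/
def pd {ι : Type*} [Fintype ι] [DecidableEq ι] (i : ι) (F : (ι → ℝ) → ℝ) :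
    (ι → ℝ) → ℝ :=
  fun a => fderiv ℝ F a (Pi.single i 1)

/-- Iterated partial derivative along a list of coordinates. -/
def pdList {ι : Type*} [Fintype ι] [DecidableEq ι] (L : List ι) (F : (ι → ℝ) → ℝ) :
    (ι → ℝ) → ℝ :=
  L.foldr pd F

/-- The `d`-variate normal density with mean `μ` and covariance matrix `S`. -/
def normpdf (d : ℕ) (x μ : Fin d → ℝ) (S : Matrix (Fin d) (Fin d) ℝ) : ℝ :=
  (2 * π) ^ (-(d : ℝ) / 2) * S.det ^ (-(1 : ℝ) / 2) *
    Real.exp (-((x - μ) ⬝ᵥ (S⁻¹ *ᵥ (x - μ))) / 2)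

/-- The symmetric matrix `S(v)` built from the coordinates `v = (v_{ij})_{i ≤ j}`,
indexed by unordered pairs (this encodes the convention `v_{ij} = v_{ji}`). -/
def Smat (d : ℕ) (v : Sym2 (Fin d) → ℝ) : Matrix (Fin d) (Fin d) ℝ :=
  Matrix.of fun i j => if i = j then v s(i, i) else v s(i, j) / 2

/-- Normal density in the `(μ, v)` parameterization. -/
def normpdfV (d : ℕ) (x μ : Fin d → ℝ) (v : Sym2 (Fin d) → ℝ) : ℝ :=
  normpdf d x μ (Smat d v)

/-- Normal density with covariate `z` and coefficient matrix `γ` (a `p × d` matrix),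
in the `(μ, v)` parameterization: `f_v(x|z; γ, μ, v) := f_v(x; μ + γᵀz, v)`. -/
def normpdfCV (d p : ℕ) (x : Fin d → ℝ) (z : Fin p → ℝ)
    (γ : Matrix (Fin p) (Fin d) ℝ) (μ : Fin d → ℝ) (v : Sym2 (Fin d) → ℝ) : ℝ :=
  normpdfV d x (fun i => μ i + (γᵀ *ᵥ z) i) v

/-- The half-vectorization `w(A)` of a symmetric matrix `A`:
`w(A)_{ii} = A_{ii}` and `w(A)_{ij} = 2 A_{ij} = A_{ij} + A_{ji}` for `i ≠ j`. -/
def wvec (d : ℕ) (A : Matrix (Fin d) (Fin d) ℝ) : Sym2 (Fin d) → ℝ :=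
  Sym2.lift ⟨fun i j => if i = j then A i i else A i j + A j i, by
    intro i j
    simp only []
    by_cases h : i = j
    · subst h; rfl
    · rw [if_neg h, if_neg fun hji => h hji.symm]
      ring⟩

/-- Reparameterized two-component homoscedastic normal mixture density. -/
def gmixH (d p : ℕ) (x : Fin d → ℝ) (z : Fin p → ℝ) (α : ℝ)
    (γ : Matrix (Fin p) (Fin d) ℝ) (nμ : Fin d → ℝ) (nv : Sym2 (Fin d) → ℝ)
    (lam : Fin d → ℝ) : ℝ :=
  α * normpdfCV d p x z γ (fun i => nμ i + (1 - α) * lam i)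
      (fun e => nv e - α * (1 - α) * wvec d (vecMulVec lam lam) e)
  + (1 - α) * normpdfCV d p x z γ (fun i => nμ i - α * lam i)
      (fun e => nv e - α * (1 - α) * wvec d (vecMulVec lam lam) e)

/-!
Write `F(μ, v) = f_v(x|z; γ*, μ, v)`. Both components of `g` are of the form
`λ ↦ F(μ* + sλ, v* + Q(λ, λ))`, with `s = 1 − α` resp. `s = −α` and the same bilinear
`Q = −α(1−α) w(· ·ᵀ)`. By the chain rule, the third `λ`-derivative at `0` of such a composition is
`s³ ∂³_μ F` plus `s` times mixed terms `∂_μ ∂_v F` against `Q` that do not depend on `s`.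
Since `α(1−α) + (1−α)(−α) = 0` the mixed terms cancel, and `α(1−α)³ + (1−α)(−α)³ = α(1−α)(1−2α)`.
-/

open Filter Topology

section PartialDerivative

variable {ι : Type*} [Fintype ι] [DecidableEq ι] {f g : (ι → ℝ) → ℝ} {a : ι → ℝ}

theorem pd_congr_of_eventuallyEq (i : ι) (h : f =ᶠ[𝓝 a] g) : pd i f a = pd i g a := by
  simp only [pd, h.fderiv_eq]

theorem HasFDerivAt.pd_eq {L : (ι → ℝ) →L[ℝ] ℝ} (h : HasFDerivAt f L a) (i : ι) :
    pd i f a = L (Pi.single i 1) := by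
  simp only [pd, h.fderiv]

theorem ContDiffAt.pd {n : ℕ} (hf : ContDiffAt ℝ (n + 1) f a) (i : ι) :
    ContDiffAt ℝ n (pd i f) a :=
  hf.fderiv_right_succ.clm_apply contDiffAt_const

theorem pd_comp_add_left (i : ι) (c : ι → ℝ) :
    pd i (fun y => f (c + y)) = fun y => pd i f (c + y) := by
  funext y
  simp only [pd, fderiv_comp_add_left]

theorem pd_pd_pd_comp_add_left (i j k : ι) (c : ι → ℝ) :
    pd i (pd j (pd k fun y => f (c + y))) 0 = pd i (pd j (pd k f)) c := by
  simp only [pd_comp_add_left, add_zero]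

theorem pd_linear_comb (i : ι) (α β : ℝ) (hf : DifferentiableAt ℝ f a)
    (hg : DifferentiableAt ℝ g a) :
    pd i (fun y => α * f y + β * g y) a = α * pd i f a + β * pd i g a := by
  simp only [pd, fderiv_fun_add (hf.const_mul α) (hg.const_mul β), fderiv_const_mul hf,
    fderiv_const_mul hg, _root_.add_apply, _root_.smul_apply, smul_eq_mul]

theorem pd_pd_pd_linear_comb (i j k : ι) (α β : ℝ) (hf : ContDiffAt ℝ 3 f a)
    (hg : ContDiffAt ℝ 3 g a) :
    pd i (pd j (pd k fun y => α * f y + β * g y)) a =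
      α * pd i (pd j (pd k f)) a + β * pd i (pd j (pd k g)) a := by
  have hf' := hf.eventually (by decide)
  have hg' := hg.eventually (by decide)
  have h₁ : pd k (fun y => α * f y + β * g y) =ᶠ[𝓝 a]
      fun y => α * pd k f y + β * pd k g y := by
    filter_upwards [hf', hg'] with y hfy hgy
    exact pd_linear_comb k α β (hfy.differentiableAt (by decide))
      (hgy.differentiableAt (by decide))
  have h₂ : pd j (pd k fun y => α * f y + β * g y) =ᶠ[𝓝 a]
      fun y => α * pd j (pd k f) y + β * pd j (pd k g) y := by
    filter_upwards [h₁.eventuallyEq_nhds, hf', hg'] with y hy hfy hgy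
    rw [pd_congr_of_eventuallyEq j hy]
    exact pd_linear_comb j α β ((hfy.pd (n := 2) k).differentiableAt (by decide))
      ((hgy.pd (n := 2) k).differentiableAt (by decide))
  rw [pd_congr_of_eventuallyEq i h₂]
  exact pd_linear_comb i α β (((hf.pd (n := 2) k).pd (n := 1) j).differentiableAt (by decide))
    (((hg.pd (n := 2) k).pd (n := 1) j).differentiableAt (by decide))

end PartialDerivative

theorem ContDiffAt.hasFDerivAt_fderiv {E G : Type*} [NormedAddCommGroup E] [NormedSpace ℝ E]
    [NormedAddCommGroup G] [NormedSpace ℝ G] {f : E → G} {x : E} (hf : ContDiffAt ℝ 2 f x) :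
    HasFDerivAt (fderiv ℝ f) (fderiv ℝ (fderiv ℝ f) x) x :=
  ((hf.fderiv_right_succ (n := 1)).differentiableAt (by decide)).hasFDerivAt

section QuadraticMap

variable {E W : Type*} [NormedAddCommGroup E] [NormedSpace ℝ E]
  [NormedAddCommGroup W] [NormedSpace ℝ W] {F : W → ℝ} (w₀ : W)
  (L : E →L[ℝ] W) (B : E →L[ℝ] E →L[ℝ] W)

theorem hasFDerivAt_quadratic (y : E) :
    HasFDerivAt (fun y => w₀ + L y + B y y) (L + (B y + B.flip y)) y := by
  have hB : HasFDerivAt (fun y => B y y) (B y + B.flip y) y := by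
    simpa using B.hasFDerivAt.clm_apply (hasFDerivAt_id y)
  exact ((hasFDerivAt_const w₀ y).add L.hasFDerivAt).add hB |>.congr_fderiv (by rw [zero_add])

theorem hasFDerivAt_quadratic_deriv_apply (u y : E) :
    HasFDerivAt (fun y => L u + B y u + B u y) (B.flip u + B u) y :=
  ((hasFDerivAt_const (L u) y).add (B.flip u).hasFDerivAt).add (B u).hasFDerivAt
    |>.congr_fderiv (by rw [zero_add])

variable {w₀ L B} in
theorem eventually_contDiffAt_comp_quadratic {n : ℕ} {y : E}
    (hF : ContDiffAt ℝ n F (w₀ + L y + B y y)) :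
    ∀ᶠ y' in 𝓝 y, ContDiffAt ℝ n F (w₀ + L y' + B y' y') :=
  (hasFDerivAt_quadratic w₀ L B y).continuousAt.eventually (hF.eventually (by simp))

end QuadraticMap

section QuadraticComposition

variable {ι W : Type*} [Fintype ι] [DecidableEq ι] [NormedAddCommGroup W] [NormedSpace ℝ W]
  {F : W → ℝ} (w₀ : W) (L : (ι → ℝ) →L[ℝ] W) (B : (ι → ℝ) →L[ℝ] (ι → ℝ) →L[ℝ] W)

theorem pd_comp_quadratic {y : ι → ℝ} (hF : DifferentiableAt ℝ F (w₀ + L y + B y y)) (k : ι) :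
    pd k (fun y => F (w₀ + L y + B y y)) y =
      fderiv ℝ F (w₀ + L y + B y y)
        (L (Pi.single k 1) + B y (Pi.single k 1) + B (Pi.single k 1) y) := by
  have h : HasFDerivAt (fun y => F (w₀ + L y + B y y)) _ y :=
    hF.hasFDerivAt.comp y (hasFDerivAt_quadratic w₀ L B y)
  rw [h.pd_eq]
  simp [add_assoc]

theorem pd_pd_comp_quadratic {y : ι → ℝ} (hF : ContDiffAt ℝ 2 F (w₀ + L y + B y y)) (j k : ι) :
    pd j (pd k fun y => F (w₀ + L y + B y y)) y =
      fderiv ℝ F (w₀ + L y + B y y)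
          (B (Pi.single j 1) (Pi.single k 1) + B (Pi.single k 1) (Pi.single j 1)) +
        fderiv ℝ (fderiv ℝ F) (w₀ + L y + B y y)
          (L (Pi.single j 1) + B y (Pi.single j 1) + B (Pi.single j 1) y)
          (L (Pi.single k 1) + B y (Pi.single k 1) + B (Pi.single k 1) y) := by
  have h₁ : pd k (fun y => F (w₀ + L y + B y y)) =ᶠ[𝓝 y] fun y => fderiv ℝ F (w₀ + L y + B y y)
      (L (Pi.single k 1) + B y (Pi.single k 1) + B (Pi.single k 1) y) := by
    filter_upwards [eventually_contDiffAt_comp_quadratic (n := 1) (hF.of_le one_le_two)]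
      with y' hy'
    exact pd_comp_quadratic w₀ L B (hy'.differentiableAt (by decide)) k
  have h₂ : HasFDerivAt (fun y => fderiv ℝ F (w₀ + L y + B y y)
      (L (Pi.single k 1) + B y (Pi.single k 1) + B (Pi.single k 1) y)) _ y :=
    (hF.hasFDerivAt_fderiv.comp y (hasFDerivAt_quadratic w₀ L B y)).clm_apply
      (hasFDerivAt_quadratic_deriv_apply L B _ y)
  rw [pd_congr_of_eventuallyEq j h₁, h₂.pd_eq]
  simp [add_assoc]

theorem pd_pd_pd_comp_quadratic (hF : ContDiffAt ℝ 3 F w₀) (i j k : ι) :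
    pd i (pd j (pd k fun y => F (w₀ + L y + B y y))) 0 =
      fderiv ℝ (fderiv ℝ (fderiv ℝ F)) w₀ (L (Pi.single i 1)) (L (Pi.single j 1))
          (L (Pi.single k 1)) +
        fderiv ℝ (fderiv ℝ F) w₀ (L (Pi.single i 1))
          (B (Pi.single j 1) (Pi.single k 1) + B (Pi.single k 1) (Pi.single j 1)) +
        fderiv ℝ (fderiv ℝ F) w₀
          (B (Pi.single i 1) (Pi.single j 1) + B (Pi.single j 1) (Pi.single i 1))
          (L (Pi.single k 1)) +
        fderiv ℝ (fderiv ℝ F) w₀ (L (Pi.single j 1))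
          (B (Pi.single i 1) (Pi.single k 1) + B (Pi.single k 1) (Pi.single i 1)) := by
  have hF₀ : ContDiffAt ℝ 3 F (w₀ + L 0 + B 0 0) := by simpa using hF
  have h₂ : pd j (pd k fun y => F (w₀ + L y + B y y)) =ᶠ[𝓝 0] fun y =>
      fderiv ℝ F (w₀ + L y + B y y)
          (B (Pi.single j 1) (Pi.single k 1) + B (Pi.single k 1) (Pi.single j 1)) +
        fderiv ℝ (fderiv ℝ F) (w₀ + L y + B y y)
          (L (Pi.single j 1) + B y (Pi.single j 1) + B (Pi.single j 1) y)
          (L (Pi.single k 1) + B y (Pi.single k 1) + B (Pi.single k 1) y) := by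
    filter_upwards [eventually_contDiffAt_comp_quadratic (n := 2) (hF₀.of_le (by norm_num))]
      with y hy
    exact pd_pd_comp_quadratic w₀ L B hy j k
  have hψ := hasFDerivAt_quadratic w₀ L B 0
  have h₃ := (((hF₀.of_le (by norm_num)).hasFDerivAt_fderiv.comp 0 hψ).clm_apply
    (hasFDerivAt_const (B (Pi.single j 1) (Pi.single k 1) + B (Pi.single k 1) (Pi.single j 1))
      0)).fun_add
    ((((hF₀.fderiv_right (m := 2) (by norm_num)).hasFDerivAt_fderiv.comp 0 hψ).clm_apply
      (hasFDerivAt_quadratic_deriv_apply L B (Pi.single j 1) 0)).clm_apply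
      (hasFDerivAt_quadratic_deriv_apply L B (Pi.single k 1) 0))
  rw [pd_congr_of_eventuallyEq i h₂]
  refine (h₃.pd_eq i).trans ?_
  simp only [Function.comp_apply, map_zero, add_zero, _root_.zero_apply,
    ContinuousLinearMap.comp_zero, map_add, zero_add, ContinuousLinearMap.comp_add,
    ContinuousLinearMap.flip_add, _root_.add_apply, ContinuousLinearMap.flip_apply,
    ContinuousLinearMap.comp_apply]
  ring

end QuadraticComposition

theorem ContDiffAt.comp_affine_quadratic {ι V : Type*} [Fintype ι] [NormedAddCommGroup V]
    [NormedSpace ℝ V] {F : (ι → ℝ) × V → ℝ} {a : ι → ℝ} {b : V} {n : WithTop ℕ∞}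
    (hF : ContDiffAt ℝ n F (a, b)) (s : ℝ) (Q : (ι → ℝ) →L[ℝ] (ι → ℝ) →L[ℝ] V) :
    ContDiffAt ℝ n (fun y => F (a + s • y, b + Q y y)) 0 := by
  have hF₀ : ContDiffAt ℝ n F (a + s • 0, b + Q 0 0) := by simpa using hF
  exact hF₀.comp 0 (by fun_prop)

section ProductComposition

variable {ι : Type*} [Fintype ι] [DecidableEq ι] {V : Type*} [NormedAddCommGroup V]
  [NormedSpace ℝ V] {F : (ι → ℝ) × V → ℝ} {a : ι → ℝ} {b : V}

theorem pd_pd_pd_comp_affine_quadratic (hF : ContDiffAt ℝ 3 F (a, b)) (s : ℝ)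
    (Q : (ι → ℝ) →L[ℝ] (ι → ℝ) →L[ℝ] V) (i j k : ι) :
    pd i (pd j (pd k fun y => F (a + s • y, b + Q y y))) 0 =
      s ^ 3 * fderiv ℝ (fderiv ℝ (fderiv ℝ F)) (a, b) (Pi.single i 1, 0) (Pi.single j 1, 0)
          (Pi.single k 1, 0) +
        s * (fderiv ℝ (fderiv ℝ F) (a, b) (Pi.single i 1, 0)
            (0, Q (Pi.single j 1) (Pi.single k 1) + Q (Pi.single k 1) (Pi.single j 1)) +
          fderiv ℝ (fderiv ℝ F) (a, b)
            (0, Q (Pi.single i 1) (Pi.single j 1) + Q (Pi.single j 1) (Pi.single i 1))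
            (Pi.single k 1, 0) +
          fderiv ℝ (fderiv ℝ F) (a, b) (Pi.single j 1, 0)
            (0, Q (Pi.single i 1) (Pi.single k 1) + Q (Pi.single k 1) (Pi.single i 1))) := by
  have h := pd_pd_pd_comp_quadratic (a, b) (s • ContinuousLinearMap.inl ℝ (ι → ℝ) V)
    (ContinuousLinearMap.compL ℝ (ι → ℝ) V ((ι → ℝ) × V) (ContinuousLinearMap.inr ℝ (ι → ℝ) V) ∘L Q)
    hF i j k
  have hs (e : ι → ℝ) : ((s • e, 0) : (ι → ℝ) × V) = s • (e, 0) := by simp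
  simp only [_root_.smul_apply, ContinuousLinearMap.inl_apply, Prod.smul_mk, smul_zero,
    Prod.mk_add_mk, add_zero, ContinuousLinearMap.comp_apply, ContinuousLinearMap.compL_apply,
    ContinuousLinearMap.inr_apply] at h
  simp only [hs, map_smul, _root_.smul_apply, smul_eq_mul] at h
  rw [h]
  ring

theorem pd_pd_pd_comp_prodMk_left (hF : ContDiffAt ℝ 3 F (a, b)) (i j k : ι) :
    pd i (pd j (pd k fun μ => F (μ, b))) a =
      fderiv ℝ (fderiv ℝ (fderiv ℝ F)) (a, b) (Pi.single i 1, 0) (Pi.single j 1, 0)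
        (Pi.single k 1, 0) := by
  rw [← pd_pd_pd_comp_add_left]
  simpa [← Prod.zero_eq_mk] using pd_pd_pd_comp_affine_quadratic hF 1 0 i j k

end ProductComposition

section Smoothness

variable {E : Type*} [NormedAddCommGroup E] [NormedSpace ℝ E] {m : Type*} [Fintype m]
  [DecidableEq m] {n : WithTop ℕ∞} {M : E → Matrix m m ℝ}

theorem contDiff_det_of_entries (hM : ∀ i j, ContDiff ℝ n fun q => M q i j) :
    ContDiff ℝ n fun q => (M q).det := by
  simp only [Matrix.det_apply']
  exact ContDiff.sum fun σ _ => contDiff_const.mul (contDiff_prod fun i _ => hM _ _)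

theorem contDiff_adjugate_of_entries (hM : ∀ i j, ContDiff ℝ n fun q => M q i j) (i j : m) :
    ContDiff ℝ n fun q => (M q).adjugate i j := by
  simp only [Matrix.adjugate_apply]
  refine contDiff_det_of_entries fun r c => ?_
  rcases eq_or_ne r j with rfl | hr
  · simpa using contDiff_const
  · simpa [Matrix.updateRow_ne hr] using hM r c

theorem contDiffAt_inv_of_entries (hM : ∀ i j, ContDiff ℝ n fun q => M q i j) {q₀ : E}
    (hq₀ : (M q₀).det ≠ 0) (i j : m) : ContDiffAt ℝ n (fun q => (M q)⁻¹ i j) q₀ := by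
  simp only [Matrix.inv_def, Ring.inverse_eq_inv, Matrix.smul_apply, smul_eq_mul]
  exact ((contDiff_det_of_entries hM).contDiffAt.inv hq₀).mul
    (contDiff_adjugate_of_entries hM i j).contDiffAt

theorem contDiffAt_normpdf {d : ℕ} (x : Fin d → ℝ) {μ : E → Fin d → ℝ}
    {S : E → Matrix (Fin d) (Fin d) ℝ} (hμ : ContDiff ℝ n μ)
    (hS : ∀ i j, ContDiff ℝ n fun q => S q i j) {q₀ : E} (hq₀ : (S q₀).det ≠ 0) :
    ContDiffAt ℝ n (fun q => normpdf d x (μ q) (S q)) q₀ := by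
  have hy : ∀ i, ContDiffAt ℝ n (fun q => x i - μ q i) q₀ := fun i =>
    contDiffAt_const.sub (contDiff_pi.mp hμ i).contDiffAt
  have hquad : ContDiffAt ℝ n (fun q => (x - μ q) ⬝ᵥ ((S q)⁻¹ *ᵥ (x - μ q))) q₀ := by
    simp only [dotProduct, mulVec, Pi.sub_apply]
    exact ContDiffAt.sum fun i _ => (hy i).mul
      (ContDiffAt.sum fun j _ => (contDiffAt_inv_of_entries hS hq₀ i j).mul (hy j))
  exact (contDiffAt_const.mul ((contDiff_det_of_entries hS).contDiffAt.rpow_const_of_ne hq₀)).mul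
    (hquad.neg.div_const 2).exp

end Smoothness

theorem contDiffAt_normpdfCV {d p : ℕ} (x : Fin d → ℝ) (z : Fin p → ℝ)
    (γ : Matrix (Fin p) (Fin d) ℝ) {a : Fin d → ℝ} {b : Sym2 (Fin d) → ℝ}
    (hb : (Smat d b).det ≠ 0) {n : WithTop ℕ∞} :
    ContDiffAt ℝ n (fun q : (Fin d → ℝ) × (Sym2 (Fin d) → ℝ) => normpdfCV d p x z γ q.1 q.2)
      (a, b) := by
  have hμ : ContDiff ℝ n fun q : (Fin d → ℝ) × (Sym2 (Fin d) → ℝ) => q.1 + γᵀ *ᵥ z :=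
    contDiff_fst.add contDiff_const
  have hv (e : Sym2 (Fin d)) : ContDiff ℝ n fun q : (Fin d → ℝ) × (Sym2 (Fin d) → ℝ) => q.2 e :=
    (contDiff_apply ℝ ℝ e).comp contDiff_snd
  have hS (i j : Fin d) : ContDiff ℝ n fun q : (Fin d → ℝ) × (Sym2 (Fin d) → ℝ) =>
      Smat d q.2 i j := by
    by_cases h : i = j
    · simpa [Smat, h] using hv s(j, j)
    · simpa [Smat, h] using (hv s(i, j)).div_const 2
  exact contDiffAt_normpdf x hμ hS hb

theorem wvec_mk (d : ℕ) (A : Matrix (Fin d) (Fin d) ℝ) (i j : Fin d) :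
    wvec d A s(i, j) = if i = j then A i i else A i j + A j i :=
  Sym2.lift_mk _ _ _

def wvecLinear (d : ℕ) : Matrix (Fin d) (Fin d) ℝ →ₗ[ℝ] Sym2 (Fin d) → ℝ where
  toFun := wvec d
  map_add' A B := by
    ext e
    induction e using Sym2.ind
    simp only [wvec_mk, Pi.add_apply, Matrix.add_apply]
    split_ifs <;> ring
  map_smul' c A := by
    ext e
    induction e using Sym2.ind
    simp only [wvec_mk, Pi.smul_apply, Matrix.smul_apply, smul_eq_mul, RingHom.id_apply]
    split_ifs <;> ring

def wvecBilin (d : ℕ) : (Fin d → ℝ) →L[ℝ] (Fin d → ℝ) →L[ℝ] Sym2 (Fin d) → ℝ :=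
  ((vecMulVecBilin ℝ ℝ).compr₂ (wvecLinear d)).toContinuousBilinearMap

theorem wvecBilin_apply (d : ℕ) (u v : Fin d → ℝ) : wvecBilin d u v = wvec d (vecMulVec u v) :=
  rfl

theorem gmixH_eq (d p : ℕ) (x : Fin d → ℝ) (z : Fin p → ℝ) (α : ℝ)
    (γ : Matrix (Fin p) (Fin d) ℝ) (nμ : Fin d → ℝ) (nv : Sym2 (Fin d) → ℝ)
    (lam : Fin d → ℝ) :
    gmixH d p x z α γ nμ nv lam =
      α * normpdfCV d p x z γ (nμ + (1 - α) • lam)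
          (nv + (-(α * (1 - α)) • wvecBilin d) lam lam) +
        (1 - α) * normpdfCV d p x z γ (nμ + (-α) • lam)
          (nv + (-(α * (1 - α)) • wvecBilin d) lam lam) := by
  unfold gmixH
  congr 3 <;> ext <;> simp [wvecBilin_apply] <;> ring

theorem gmixH_lam_third_deriv_general
    (d p : ℕ) (α : ℝ)
    (γstar : Matrix (Fin p) (Fin d) ℝ) (μstar : Fin d → ℝ)
    (vstar : Sym2 (Fin d) → ℝ) (hvstar : (Smat d vstar).PosDef)
    (x : Fin d → ℝ) (z : Fin p → ℝ) (i j k : Fin d) :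
    pd i (pd j (pd k
        (fun lam => gmixH d p x z α γstar μstar vstar lam))) 0 =
      α * (1 - α) * (1 - 2 * α) *
        pd i (pd j (pd k (fun μ => normpdfCV d p x z γstar μ vstar))) μstar := by
  set F : (Fin d → ℝ) × (Sym2 (Fin d) → ℝ) → ℝ := fun q => normpdfCV d p x z γstar q.1 q.2
  set Q := -(α * (1 - α)) • wvecBilin d
  have hF : ContDiffAt ℝ 3 F (μstar, vstar) := contDiffAt_normpdfCV x z γstar hvstar.det_pos.ne'
  have hg : (fun lam => gmixH d p x z α γstar μstar vstar lam) = fun lam =>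
      α * F (μstar + (1 - α) • lam, vstar + Q lam lam) +
        (1 - α) * F (μstar + (-α) • lam, vstar + Q lam lam) :=
    funext (gmixH_eq d p x z α γstar μstar vstar)
  rw [hg, pd_pd_pd_linear_comb i j k α (1 - α) (hF.comp_affine_quadratic _ Q)
      (hF.comp_affine_quadratic _ Q), pd_pd_pd_comp_affine_quadratic hF,
    pd_pd_pd_comp_affine_quadratic hF,
    show (fun μ => normpdfCV d p x z γstar μ vstar) = fun μ => F (μ, vstar) from rfl,
    pd_pd_pd_comp_prodMk_left hF]
  ring

/-- Lemma D.3(b): the third-order `λ` derivative of the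
homoscedastic `g` at `ψ* = (η*, 0)` equals `α(1−α)(1−2α)` times the third-order mean
derivative of `f_v`. -/
theorem gmixH_lam_third_deriv
    (d p : ℕ) (hd : 1 ≤ d) (α : ℝ) (hα : α ∈ Set.Ioo (0 : ℝ) 1)
    (γstar : Matrix (Fin p) (Fin d) ℝ) (μstar : Fin d → ℝ)
    (vstar : Sym2 (Fin d) → ℝ) (hvstar : (Smat d vstar).PosDef)
    (x : Fin d → ℝ) (z : Fin p → ℝ) (i j k : Fin d) :
    pd i (pd j (pd k
        (fun lam => gmixH d p x z α γstar μstar vstar lam))) 0 =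
      α * (1 - α) * (1 - 2 * α) *
        pd i (pd j (pd k (fun μ => normpdfCV d p x z γstar μ vstar))) μstar :=
  gmixH_lam_third_deriv_general d p α γstar μstar vstar hvstar x z i j k

end
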